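/- Let n be a positive integer, let 0 < p_out < p_in < 1, let θ = 0 and 0 < η ≤ 1 (perfect oracle). Under the SSBM-with-oracle joint distribution, for every symmetric 0-1 adjacency matrix a (with zero diagonal) and every vector s ∈ {−1,0,1}ⁿ such that Pr(A = a, S = s) > 0, the set of maximizers over σ ∈ {−1,1}ⁿ of Pr(σ⁰ = σ | A = a, S = s) is equal to the set of minimizers of cut(C₁^σ, a) − τ·|C₁^σ|·(n − |C₁^σ|) over all σ ∈ {−1,1}ⁿ satisfying σ_i = s_i for every i with s_i ≠ 0, where τ := log((1−p_out)/(1−p_in)) / log((p_in(1−p_out))/(p_out(1−p_in))). -/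

import Mathlib

open Finset

noncomputable section

/-- Sign value of a Boolean cluster label: `true ↦ 1`, `false ↦ -1`. -/
def sgnB (b : Bool) : ℤ := if b then 1 else -1

/-- Joint probability mass of the SSBM-with-oracle distribution at the point
`(σ, a, s)`: the ground truth `σ⁰ = σ` (uniform on `{−1,1}ⁿ`, encoded by `Bool`),
the adjacency matrix `A = a` and the oracle vector `S = s`. -/
def jointMass (n : ℕ) (pin pout η θ : ℝ) (σ : Fin n → Bool)
    (a : Fin n → Fin n → ℕ) (s : Fin n → ℤ) : ℝ :=
  (1 / 2) ^ n *
    (∏ p ∈ Finset.univ.filter (fun p : Fin n × Fin n => p.1 < p.2),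
      (if a p.1 p.2 = 1 then (if σ p.1 = σ p.2 then pin else pout)
        else (if σ p.1 = σ p.2 then 1 - pin else 1 - pout))) *
    ∏ j, (if s j = sgnB (σ j) then η else if s j = - sgnB (σ j) then θ else 1 - η - θ)

/-- Posterior probability `Pr(σ⁰ = σ | A = a, S = s)`, as a ratio of probabilities. -/
def posterior (n : ℕ) (pin pout η θ : ℝ) (σ : Fin n → Bool)
    (a : Fin n → Fin n → ℕ) (s : Fin n → ℤ) : ℝ :=
  jointMass n pin pout η θ σ a s / ∑ σ' : Fin n → Bool, jointMass n pin pout η θ σ' a s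

/-- `cut(C₁^σ, a) = Σ_{i ∈ C₁^σ, j ∉ C₁^σ} a_{ij}`. -/
def cutVal (n : ℕ) (σ : Fin n → Bool) (a : Fin n → Fin n → ℕ) : ℝ :=
  ∑ i, ∑ j, (if σ i = true ∧ σ j = false then (a i j : ℝ) else 0)

/-- The unsupervised MAP objective `cut(C₁^σ, a) − τ|C₁^σ|(n − |C₁^σ|)`. -/
def cutObjective (n : ℕ) (τ : ℝ) (σ : Fin n → Bool) (a : Fin n → Fin n → ℕ) : ℝ :=
  cutVal n σ a
    - τ * ((Finset.univ.filter (fun i => σ i = true)).card : ℝ)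
        * ((n : ℝ) - ((Finset.univ.filter (fun i => σ i = true)).card : ℝ))

/-!
With a perfect oracle the oracle factor of the joint mass vanishes on every labelling that
contradicts a revealed label and takes one and the same value `K` on all the others, and
`Pr(A = a, S = s) > 0` forces `K > 0`. So the posterior is a positive multiple of the edge
likelihood on the oracle-consistent labellings and zero elsewhere, and its maximizers are the
consistent maximizers of the edge likelihood. Relative to a pair inside a cluster, a pair across
the cut contributes `log(p_out/p_in)` or `log((1-p_out)/(1-p_in))` to the log-likelihood according
as it is an edge or not; hence the log-likelihood is a constant minus
`λ · (cut(C₁^σ, a) - τ |C₁^σ| (n - |C₁^σ|))` with `λ = log(p_in(1-p_out)/(p_out(1-p_in))) > 0`,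
because `|C₁^σ| (n - |C₁^σ|)` is the number of pairs across the cut.
-/

theorem Finset.sum_eq_sum_filter_lt_add_swap {α M : Type*} [LinearOrder α] [Fintype α]
    [AddCommMonoid M] (f : α × α → M) (hf : ∀ x, f (x, x) = 0) :
    ∑ p, f p = ∑ p ∈ univ.filter (fun p : α × α => p.1 < p.2), (f p + f p.swap) := by
  have hgt : ∑ p ∈ univ.filter (fun p : α × α => ¬ p.1 < p.2), f p
      = ∑ p ∈ univ.filter (fun p : α × α => p.1 < p.2), f p.swap := by
    rw [← sum_filter_add_sum_filter_not _ (fun p : α × α => p.1 = p.2),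
      sum_eq_zero fun ⟨x, y⟩ hp => by
        obtain rfl : x = y := (mem_filter.1 hp).2
        exact hf x, zero_add]
    refine sum_nbij' Prod.swap Prod.swap ?_ ?_ (by simp) (by simp) (by simp)
    · intro p hp
      simp only [mem_filter, mem_univ, true_and, Prod.fst_swap, Prod.snd_swap] at hp ⊢
      exact lt_of_le_of_ne (not_lt.1 hp.1) (Ne.symm hp.2)
    · intro p hp
      simp only [mem_filter, mem_univ, true_and, Prod.fst_swap, Prod.snd_swap] at hp ⊢
      exact ⟨hp.not_gt, hp.ne'⟩
  rw [← sum_filter_add_sum_filter_not univ (fun p : α × α => p.1 < p.2), hgt, sum_add_distrib]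

theorem cutVal_eq_sum_lt {n : ℕ} (σ : Fin n → Bool) {a : Fin n → Fin n → ℕ}
    (hasym : ∀ i j, a i j = a j i) :
    cutVal n σ a = ∑ p ∈ univ.filter (fun p : Fin n × Fin n => p.1 < p.2),
      if σ p.1 = σ p.2 then 0 else (a p.1 p.2 : ℝ) := by
  rw [cutVal, ← Fintype.sum_prod_type', sum_eq_sum_filter_lt_add_swap _ (by simp)]
  refine sum_congr rfl fun ⟨i, j⟩ _ => ?_
  rcases hi : σ i <;> rcases hj : σ j <;> simp [hi, hj, hasym i j]

theorem cutVal_one {n : ℕ} (σ : Fin n → Bool) :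
    cutVal n σ (fun _ _ => 1) = (#{i | σ i = true} : ℝ) * (n - #{i | σ i = true}) := by
  have hfalse : (#{i | σ i = false} : ℝ) = n - #{i | σ i = true} := by
    rw [eq_sub_iff_add_eq, add_comm]
    simpa using congrArg (Nat.cast : ℕ → ℝ) <|
      card_filter_add_card_filter_not (s := univ) (fun i => σ i = true)
  simp only [cutVal, ite_and, Nat.cast_one]
  simp only [sum_ite_irrel, sum_boole, hfalse, sum_const_zero, sum_ite, sum_sub_distrib, sum_const,
    nsmul_eq_mul, Bool.not_eq_true, add_zero]
  ring

def edgeLikelihood (n : ℕ) (pin pout : ℝ) (σ : Fin n → Bool) (a : Fin n → Fin n → ℕ) : ℝ :=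
  ∏ p ∈ univ.filter (fun p : Fin n × Fin n => p.1 < p.2),
    (if a p.1 p.2 = 1 then (if σ p.1 = σ p.2 then pin else pout)
      else (if σ p.1 = σ p.2 then 1 - pin else 1 - pout))

def oracleLikelihood (n : ℕ) (η θ : ℝ) (σ : Fin n → Bool) (s : Fin n → ℤ) : ℝ :=
  ∏ j, (if s j = sgnB (σ j) then η else if s j = - sgnB (σ j) then θ else 1 - η - θ)

theorem jointMass_eq (n : ℕ) (pin pout η θ : ℝ) (σ : Fin n → Bool) (a : Fin n → Fin n → ℕ)
    (s : Fin n → ℤ) :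
    jointMass n pin pout η θ σ a s =
      (1 / 2) ^ n * edgeLikelihood n pin pout σ a * oracleLikelihood n η θ σ s :=
  rfl

section EdgeLikelihood

variable {pin pout : ℝ}

theorem log_edge_odds_ratio_pos (hpout : 0 < pout) (hp : pout < pin) (hpin : pin < 1) :
    0 < Real.log (pin * (1 - pout) / (pout * (1 - pin))) :=
  Real.log_pos <| (one_lt_div (by nlinarith)).2 (by nlinarith)

theorem edgeLikelihood_pos (hpout : 0 < pout) (hp : pout < pin) (hpin : pin < 1) {n : ℕ}
    (σ : Fin n → Bool) (a : Fin n → Fin n → ℕ) : 0 < edgeLikelihood n pin pout σ a :=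
  prod_pos fun _ _ => by split_ifs <;> linarith

theorem log_edgeFactor (hpout : 0 < pout) (hp : pout < pin) (hpin : pin < 1) {x : ℕ}
    (hx : x = 0 ∨ x = 1) (c : Prop) [Decidable c] :
    Real.log (if x = 1 then (if c then pin else pout) else (if c then 1 - pin else 1 - pout)) =
      (if x = 1 then Real.log pin else Real.log (1 - pin)) +
        if c then 0 else Real.log ((1 - pout) / (1 - pin)) -
          Real.log (pin * (1 - pout) / (pout * (1 - pin))) * x := by
  have h0pin : pin ≠ 0 := (hpout.trans hp).ne'
  have h1pin : 1 - pin ≠ 0 := by linarith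
  have h1pout : 1 - pout ≠ 0 := by linarith
  rw [Real.log_div h1pout h1pin, Real.log_div (mul_ne_zero h0pin h1pout)
    (mul_ne_zero hpout.ne' h1pin), Real.log_mul h0pin h1pout, Real.log_mul hpout.ne' h1pin]
  rcases hx with rfl | rfl <;> by_cases hc : c <;>
    simp only [zero_ne_one, ↓reduceIte, hc, Nat.cast_zero, Nat.cast_one, mul_zero, mul_one,
      sub_zero, add_zero, add_sub_cancel]
  ring

theorem log_edgeLikelihood (hpout : 0 < pout) (hp : pout < pin) (hpin : pin < 1) {n : ℕ}
    (σ : Fin n → Bool) {a : Fin n → Fin n → ℕ} (ha01 : ∀ i j, a i j = 0 ∨ a i j = 1)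
    (hasym : ∀ i j, a i j = a j i) :
    Real.log (edgeLikelihood n pin pout σ a) =
      (∑ p ∈ univ.filter (fun p : Fin n × Fin n => p.1 < p.2),
          if a p.1 p.2 = 1 then Real.log pin else Real.log (1 - pin)) -
        Real.log (pin * (1 - pout) / (pout * (1 - pin))) *
          cutObjective n (Real.log ((1 - pout) / (1 - pin)) /
            Real.log (pin * (1 - pout) / (pout * (1 - pin)))) σ a := by
  rw [edgeLikelihood, Real.log_prod fun p _ => by split_ifs <;> linarith,
    sum_congr rfl fun p _ => log_edgeFactor hpout hp hpin (ha01 p.1 p.2) _]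
  set β := Real.log ((1 - pout) / (1 - pin))
  set lam := Real.log (pin * (1 - pout) / (pout * (1 - pin)))
  have hlam : lam ≠ 0 := (log_edge_odds_ratio_pos hpout hp hpin).ne'
  have hsplit (c : Prop) [Decidable c] (x : ℝ) :
      (if c then 0 else β - lam * x) = β * (if c then 0 else 1) - lam * (if c then 0 else x) := by
    split_ifs <;> ring
  have hcount : (∑ p ∈ univ.filter (fun p : Fin n × Fin n => p.1 < p.2),
      if σ p.1 = σ p.2 then 0 else 1 : ℝ) = #{i | σ i = true} * (n - #{i | σ i = true}) := by
    rw [← cutVal_one, cutVal_eq_sum_lt σ fun _ _ => rfl, Nat.cast_one]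
  simp only [sum_add_distrib, hsplit, sum_sub_distrib, ← mul_sum, hcount, cutObjective,
    cutVal_eq_sum_lt σ hasym]
  field_simp
  ring

theorem edgeLikelihood_le_iff (hpout : 0 < pout) (hp : pout < pin) (hpin : pin < 1) {n : ℕ}
    {σ σ' : Fin n → Bool} {a : Fin n → Fin n → ℕ} (ha01 : ∀ i j, a i j = 0 ∨ a i j = 1)
    (hasym : ∀ i j, a i j = a j i) :
    edgeLikelihood n pin pout σ' a ≤ edgeLikelihood n pin pout σ a ↔
      cutObjective n (Real.log ((1 - pout) / (1 - pin)) /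
          Real.log (pin * (1 - pout) / (pout * (1 - pin)))) σ a ≤
        cutObjective n (Real.log ((1 - pout) / (1 - pin)) /
          Real.log (pin * (1 - pout) / (pout * (1 - pin)))) σ' a := by
  rw [← Real.log_le_log_iff (edgeLikelihood_pos hpout hp hpin σ' a)
      (edgeLikelihood_pos hpout hp hpin σ a), log_edgeLikelihood hpout hp hpin σ' ha01 hasym,
    log_edgeLikelihood hpout hp hpin σ ha01 hasym, sub_le_sub_iff_left,
    mul_le_mul_iff_of_pos_left (log_edge_odds_ratio_pos hpout hp hpin)]

end EdgeLikelihood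

def AgreesWithOracle {n : ℕ} (s : Fin n → ℤ) (σ : Fin n → Bool) : Prop :=
  ∀ i, s i ≠ 0 → sgnB (σ i) = s i

section Oracle

variable {n : ℕ} {s : Fin n → ℤ} {σ : Fin n → Bool}

theorem exists_agreesWithOracle (hs : ∀ i, s i = -1 ∨ s i = 0 ∨ s i = 1) :
    ∃ σ, AgreesWithOracle s σ :=
  ⟨fun i => decide (s i = 1), fun i hi => by rcases hs i with h | h | h <;> simp_all [sgnB]⟩

theorem oracleLikelihood_of_agrees (η θ : ℝ) (h : AgreesWithOracle s σ) :
    oracleLikelihood n η θ σ s = ∏ j, if s j = 0 then 1 - η - θ else η := by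
  refine prod_congr rfl fun j _ => ?_
  by_cases hj : s j = 0
  · cases σ j <;> simp [hj, sgnB]
  · rw [if_pos (h j hj).symm, if_neg hj]

theorem oracleLikelihood_zero_of_not_agrees (η : ℝ) (hs : ∀ i, s i = -1 ∨ s i = 0 ∨ s i = 1)
    (h : ¬ AgreesWithOracle s σ) : oracleLikelihood n η 0 σ s = 0 := by
  obtain ⟨j, hj, hne⟩ : ∃ j, s j ≠ 0 ∧ sgnB (σ j) ≠ s j := by
    simpa [AgreesWithOracle] using h
  refine prod_eq_zero (mem_univ j) ?_
  rcases hs j with h | h | h <;> rcases hb : σ j <;> simp [h, hb, sgnB] at hj hne ⊢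

theorem jointMass_perfect_oracle (pin pout η : ℝ) (a : Fin n → Fin n → ℕ)
    (hs : ∀ i, s i = -1 ∨ s i = 0 ∨ s i = 1) :
    jointMass n pin pout η 0 σ a s = {σ | AgreesWithOracle s σ}.indicator
      (fun σ => (1 / 2) ^ n * edgeLikelihood n pin pout σ a * ∏ j, if s j = 0 then 1 - η else η)
      σ := by
  by_cases h : AgreesWithOracle s σ
  · simp [h, jointMass_eq, oracleLikelihood_of_agrees]
  · simp [h, jointMass_eq, oracleLikelihood_zero_of_not_agrees η hs]

end Oracle

theorem setOf_forall_indicator_le_eq {α β : Type*} [Preorder β] [Zero β] {t : Set α}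
    {g : α → β} (hg : ∀ x ∈ t, 0 < g x) (ht : t.Nonempty) :
    {x | ∀ y, t.indicator g y ≤ t.indicator g x} = {x | x ∈ t ∧ ∀ y ∈ t, g y ≤ g x} := by
  ext x
  refine ⟨fun hx => ?_, fun ⟨hxt, hx⟩ y => ?_⟩
  · obtain ⟨x₀, hx₀⟩ := ht
    have hxt : x ∈ t := by
      by_contra hxt
      have := hx x₀
      rw [Set.indicator_of_mem hx₀, Set.indicator_of_notMem hxt] at this
      exact (hg x₀ hx₀).not_ge this
    refine ⟨hxt, fun y hy => ?_⟩
    simpa [Set.indicator_of_mem hy, Set.indicator_of_mem hxt] using hx y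
  · rw [Set.indicator_of_mem hxt]
    by_cases hy : y ∈ t
    · simpa [Set.indicator_of_mem hy] using hx y hy
    · simpa [Set.indicator_of_notMem hy] using (hg x hxt).le

theorem map_estimator_perfect_oracle_general
    (n : ℕ) (pin pout η : ℝ)
    (hpout : 0 < pout) (hp : pout < pin) (hpin : pin < 1)
    (a : Fin n → Fin n → ℕ)
    (ha01 : ∀ i j, a i j = 0 ∨ a i j = 1)
    (hasym : ∀ i j, a i j = a j i)
    (s : Fin n → ℤ) (hs : ∀ i, s i = -1 ∨ s i = 0 ∨ s i = 1)
    (hpos : 0 < ∑ σ : Fin n → Bool, jointMass n pin pout η 0 σ a s) :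
    {σ : Fin n → Bool | ∀ σ' : Fin n → Bool,
        posterior n pin pout η 0 σ' a s ≤ posterior n pin pout η 0 σ a s}
      =
    {σ : Fin n → Bool |
        (∀ i, s i ≠ 0 → sgnB (σ i) = s i) ∧
        ∀ σ' : Fin n → Bool, (∀ i, s i ≠ 0 → sgnB (σ' i) = s i) →
          cutObjective n
              (Real.log ((1 - pout) / (1 - pin)) /
                Real.log ((pin * (1 - pout)) / (pout * (1 - pin))))
              σ a
            ≤ cutObjective n
              (Real.log ((1 - pout) / (1 - pin)) /
                Real.log ((pin * (1 - pout)) / (pout * (1 - pin))))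
              σ' a} := by
  set K : ℝ := ∏ j, if s j = 0 then 1 - η else η
  set Z := ∑ σ : Fin n → Bool, jointMass n pin pout η 0 σ a s
  have hL := edgeLikelihood_pos hpout hp hpin (a := a)
  -- every term of `Z` has the sign of `K`
  have hK : 0 < K := by
    by_contra! hK
    refine hpos.not_ge (sum_nonpos fun σ _ => ?_)
    rw [jointMass_perfect_oracle pin pout η a hs]
    exact Set.indicator_nonpos
      (fun σ _ => mul_nonpos_of_nonneg_of_nonpos (mul_pos (by positivity) (hL σ)).le hK) σ
  have hc : 0 < (1 / 2) ^ n * K / Z := by positivity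
  have hpost (σ) : posterior n pin pout η 0 σ a s =
      {σ | AgreesWithOracle s σ}.indicator
        (fun σ => (1 / 2) ^ n * K / Z * edgeLikelihood n pin pout σ a) σ := by
    rw [posterior, jointMass_perfect_oracle pin pout η a hs]
    by_cases h : AgreesWithOracle s σ
    · simp only [Set.indicator_of_mem (show σ ∈ {σ | AgreesWithOracle s σ} from h)]
      ring
    · simp [h]
  simp only [hpost]
  rw [setOf_forall_indicator_le_eq (t := {σ | AgreesWithOracle s σ})
    (fun σ _ => mul_pos hc (hL σ)) (exists_agreesWithOracle hs)]
  ext σ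
  exact and_congr_right fun _ => forall₂_congr fun σ' _ =>
    (mul_le_mul_iff_of_pos_left hc).trans (edgeLikelihood_le_iff hpout hp hpin ha01 hasym)

/-- **Theorem 1, perfect oracle case (`θ = 0`).** The maximizers of the posterior
`Pr(σ⁰ = σ | A = a, S = s)` are exactly the minimizers of
`cut(C₁^σ, a) − τ|C₁^σ|(n − |C₁^σ|)` over the sign vectors `σ` that agree with
the oracle on every labeled node, with
`τ = log((1−p_out)/(1−p_in)) / log(p_in(1−p_out)/(p_out(1−p_in)))`. -/
theorem map_estimator_perfect_oracle
    (n : ℕ) (hn : 0 < n) (pin pout η : ℝ)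
    (hpout : 0 < pout) (hp : pout < pin) (hpin : pin < 1)
    (hη : 0 < η) (hη1 : η ≤ 1)
    (a : Fin n → Fin n → ℕ)
    (ha01 : ∀ i j, a i j = 0 ∨ a i j = 1)
    (hasym : ∀ i j, a i j = a j i)
    (hadiag : ∀ i, a i i = 0)
    (s : Fin n → ℤ) (hs : ∀ i, s i = -1 ∨ s i = 0 ∨ s i = 1)
    (hpos : 0 < ∑ σ : Fin n → Bool, jointMass n pin pout η 0 σ a s) :
    {σ : Fin n → Bool | ∀ σ' : Fin n → Bool,
        posterior n pin pout η 0 σ' a s ≤ posterior n pin pout η 0 σ a s}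
      =
    {σ : Fin n → Bool |
        (∀ i, s i ≠ 0 → sgnB (σ i) = s i) ∧
        ∀ σ' : Fin n → Bool, (∀ i, s i ≠ 0 → sgnB (σ' i) = s i) →
          cutObjective n
              (Real.log ((1 - pout) / (1 - pin)) /
                Real.log ((pin * (1 - pout)) / (pout * (1 - pin))))
              σ a
            ≤ cutObjective n
              (Real.log ((1 - pout) / (1 - pin)) /
                Real.log ((pin * (1 - pout)) / (pout * (1 - pin))))
              σ' a} :=
  map_estimator_perfect_oracle_general n pin pout η hpout hp hpin a ha01 hasym s hs hpos

end
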